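/- For the random-offset scheme with d fixed, the limit as w → ∞ of P_{w,q} is 1 for every d > 0; whereas for the no-offset scheme with independent inputs (ρ = 0), the limit as w → ∞ of P_w(0) = 2∑_{i=0}^∞(Φ((i+1)w) - Φ(iw))² is 1/2. In particular, lim_{w→∞} P_w(0) < lim_{w→∞} P_{w,q} for any d > 0. -/

import Mathlib

/-!
With an offset, the collision probability is `∫₀^w g(t) (1 - t/w) dt` for the density `g` of
`|N(0, d)|`; the correction `w⁻¹ ∫₀^w t g(t) dt` vanishes because `g` has a finite first moment,
so the limit is the total mass `1`. Without an offset, the `i`-th term is the square of the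
increment `Φ((i+1)w) - Φ(iw)`: the first increment tends to `1 - Φ(0) = 1/2`, while the later
ones are each at most `1 - Φ(w)` and sum to `1 - Φ(w)`, so their squares contribute at most
`(1 - Φ(w))² → 0`. Hence the limit is `2 (1/2)² = 1/2`.
-/

open MeasureTheory ProbabilityTheory Real Set

/-- Standard normal density. -/
noncomputable def stdPdf (x : ℝ) : ℝ := (Real.sqrt (2 * Real.pi))⁻¹ * Real.exp (-x ^ 2 / 2)

/-- Standard normal CDF. -/
noncomputable def Phi (x : ℝ) : ℝ := ∫ t in Set.Iic x, stdPdf t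

open Filter Topology

lemma stdPdf_eq_gaussianPDFReal : stdPdf = gaussianPDFReal 0 1 := by
  ext x
  simp [stdPdf, gaussianPDFReal]

lemma stdPdf_neg (x : ℝ) : stdPdf (-x) = stdPdf x := by
  simp [stdPdf]

lemma integrable_stdPdf : Integrable stdPdf :=
  stdPdf_eq_gaussianPDFReal ▸ integrable_gaussianPDFReal 0 1

lemma integral_stdPdf : ∫ x, stdPdf x = 1 :=
  stdPdf_eq_gaussianPDFReal ▸ integral_gaussianPDFReal_eq_one 0 one_ne_zero

lemma Phi_eq_cdf : Phi = cdf (gaussianReal 0 1) := by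
  ext x
  rw [cdf_eq_real, measureReal_def, gaussianReal_apply_eq_integral 0 one_ne_zero,
    ENNReal.toReal_ofReal
      (setIntegral_nonneg measurableSet_Iic fun t _ ↦ gaussianPDFReal_nonneg 0 1 t),
    Phi, stdPdf_eq_gaussianPDFReal]

lemma monotone_Phi : Monotone Phi :=
  Phi_eq_cdf ▸ monotone_cdf _

lemma tendsto_Phi_atTop : Tendsto Phi atTop (𝓝 1) :=
  Phi_eq_cdf ▸ tendsto_cdf_atTop _

lemma Phi_add_integral_Ioi (x : ℝ) : Phi x + ∫ t in Ioi x, stdPdf t = 1 :=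
  (intervalIntegral.integral_Iic_add_Ioi integrable_stdPdf.integrableOn
    integrable_stdPdf.integrableOn).trans integral_stdPdf

lemma Phi_zero_eq_integral_Ioi : Phi 0 = ∫ t in Ioi 0, stdPdf t := by
  simpa [Phi, stdPdf_neg] using integral_comp_neg_Iic 0 stdPdf

lemma integral_Ioi_zero_stdPdf : ∫ t in Ioi 0, stdPdf t = 1 / 2 := by
  linarith [Phi_add_integral_Ioi 0, Phi_zero_eq_integral_Ioi]

lemma Phi_zero : Phi 0 = 1 / 2 :=
  Phi_zero_eq_integral_Ioi.trans integral_Ioi_zero_stdPdf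

lemma integrable_mul_stdPdf : Integrable fun x ↦ x * stdPdf x := by
  refine ((integrable_mul_exp_neg_mul_sq (one_half_pos (α := ℝ))).const_mul
    (√(2 * π))⁻¹).congr (ae_of_all _ fun x ↦ ?_)
  simp only [stdPdf]
  ring_nf

lemma integrable_scaled_stdPdf {s : ℝ} (hs : 0 < s) :
    Integrable fun t ↦ 2 / s * stdPdf (t / s) :=
  (integrable_stdPdf.comp_div hs.ne').const_mul _

lemma integrable_mul_scaled_stdPdf {s : ℝ} (hs : 0 < s) :
    Integrable fun t ↦ t * (2 / s * stdPdf (t / s)) := by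
  refine ((integrable_mul_stdPdf.comp_div hs.ne').const_mul 2).congr (ae_of_all _ fun t ↦ ?_)
  field_simp

lemma integral_Ioi_scaled_stdPdf {s : ℝ} (hs : 0 < s) :
    ∫ t in Ioi 0, 2 / s * stdPdf (t / s) = 1 := by
  simp_rw [integral_const_mul, div_eq_inv_mul _ s]
  rw [integral_comp_mul_left_Ioi stdPdf 0 (inv_pos.2 hs), mul_zero, integral_Ioi_zero_stdPdf,
    smul_eq_mul, inv_inv]
  field_simp

lemma tendsto_setIntegral_Ioc_mul_one_sub_div {g : ℝ → ℝ} (hg : IntegrableOn g (Ioi 0))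
    (htg : IntegrableOn (fun t ↦ t * g t) (Ioi 0)) :
    Tendsto (fun w ↦ ∫ t in Ioc 0 w, g t * (1 - t / w)) atTop (𝓝 (∫ t in Ioi 0, g t)) := by
  have hmass := intervalIntegral_tendsto_integral_Ioi 0 hg tendsto_id
  have hmoment := intervalIntegral_tendsto_integral_Ioi 0 htg tendsto_id
  have hlim := hmass.sub (tendsto_inv_atTop_zero.mul hmoment)
  rw [zero_mul, sub_zero] at hlim
  refine hlim.congr' ?_
  filter_upwards [eventually_ge_atTop 0] with w hw
  simp only [id, intervalIntegral.integral_of_le hw]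
  rw [← integral_const_mul, ← integral_sub (hg.mono_set Ioc_subset_Ioi_self)
    ((htg.mono_set Ioc_subset_Ioi_self).const_mul _)]
  congr 1 with t
  ring

section MonotoneSequence

variable {u : ℕ → ℝ} {L : ℝ}

lemma Monotone.hasSum_sub (hu : Monotone u) (hL : Tendsto u atTop (𝓝 L)) :
    HasSum (fun i ↦ u (i + 1) - u i) (L - u 0) :=
  (hasSum_iff_tendsto_nat_of_nonneg (fun i ↦ sub_nonneg.2 (hu i.le_succ)) _).2 <| by
    simpa only [Finset.sum_range_sub] using hL.sub_const (u 0)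

lemma Monotone.summable_sq_sub (hu : Monotone u) (hL : Tendsto u atTop (𝓝 L)) :
    Summable fun i ↦ (u (i + 1) - u i) ^ 2 := by
  refine ((hu.hasSum_sub hL).summable.mul_left (L - u 0)).of_nonneg_of_le (fun i ↦ sq_nonneg _)
    fun i ↦ ?_
  rw [sq]
  exact mul_le_mul_of_nonneg_right (by linarith [hu.ge_of_tendsto hL (i + 1), hu (Nat.zero_le i)])
    (sub_nonneg.2 (hu i.le_succ))

/-- Past the first step every increment is at most `L - u 1`, and together they sum to
`L - u 1`. -/
lemma Monotone.tsum_sq_sub_le (hu : Monotone u) (hL : Tendsto u atTop (𝓝 L)) :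
    ∑' i, (u (i + 1) - u i) ^ 2 ≤ (u 1 - u 0) ^ 2 + (L - u 1) ^ 2 := by
  have hsq := hu.summable_sq_sub hL
  have htail : HasSum (fun i ↦ u (i + 1 + 1) - u (i + 1)) (L - u 1) :=
    Monotone.hasSum_sub (fun _ _ h ↦ hu (Nat.add_le_add_right h 1))
      (hL.comp (tendsto_add_atTop_nat 1))
  rw [hsq.tsum_eq_zero_add, zero_add, sq (L - u 1)]
  refine add_le_add le_rfl (hasSum_le (fun i ↦ ?_) ((summable_nat_add_iff 1).2 hsq).hasSum
    (htail.mul_left (L - u 1)))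
  rw [sq]
  exact mul_le_mul_of_nonneg_right
    (by linarith [hu.ge_of_tendsto hL (i + 1 + 1), hu (Nat.le_add_left 1 i)])
    (sub_nonneg.2 (hu (i + 1).le_succ))

end MonotoneSequence

lemma Monotone.tendsto_tsum_sq_sub_mul {F : ℝ → ℝ} {L : ℝ} (hF : Monotone F)
    (hL : Tendsto F atTop (𝓝 L)) :
    Tendsto (fun w ↦ ∑' i : ℕ, (F ((i + 1) * w) - F (i * w)) ^ 2) atTop (𝓝 ((L - F 0) ^ 2)) := by
  have hlower : Tendsto (fun w ↦ (F w - F 0) ^ 2) atTop (𝓝 ((L - F 0) ^ 2)) :=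
    (hL.sub_const _).pow 2
  have hupper : Tendsto (fun w ↦ (F w - F 0) ^ 2 + (L - F w) ^ 2) atTop
      (𝓝 ((L - F 0) ^ 2)) := by
    simpa using hlower.add ((tendsto_const_nhds (x := L)).sub hL |>.pow 2)
  have hbounds : ∀ᶠ w in atTop, (F w - F 0) ^ 2 ≤ ∑' i : ℕ, (F ((i + 1) * w) - F (i * w)) ^ 2 ∧
      ∑' i : ℕ, (F ((i + 1) * w) - F (i * w)) ^ 2 ≤ (F w - F 0) ^ 2 + (L - F w) ^ 2 := by
    filter_upwards [eventually_gt_atTop 0] with w hw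
    have hu : Monotone fun n : ℕ ↦ F (n * w) :=
      fun m n h ↦ hF (mul_le_mul_of_nonneg_right (Nat.cast_le.2 h) hw.le)
    have hlim : Tendsto (fun n : ℕ ↦ F (n * w)) atTop (𝓝 L) :=
      hL.comp (tendsto_natCast_atTop_atTop.atTop_mul_const hw)
    have hlow := (hu.summable_sq_sub hlim).le_tsum 0 fun _ _ ↦ sq_nonneg _
    have hup := hu.tsum_sq_sub_le hlim
    push_cast at hlow hup
    simp only [one_mul, zero_mul] at hlow hup
    exact ⟨hlow, hup⟩
  exact tendsto_of_tendsto_of_tendsto_of_le_of_le' hlower hupper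
    (hbounds.mono fun _ h ↦ h.1) (hbounds.mono fun _ h ↦ h.2)

/-- As w → ∞, the random-offset collision probability tends to 1 for every d > 0,
while the no-offset collision probability at ρ = 0 tends to 1/2 < 1. -/
theorem stmt14 :
    (∀ d : ℝ, 0 < d →
      Filter.Tendsto
        (fun w : ℝ => ∫ t in Set.Ioc (0 : ℝ) w,
          (2 / Real.sqrt d) * stdPdf (t / Real.sqrt d) * (1 - t / w))
        Filter.atTop (nhds 1)) ∧
    Filter.Tendsto
      (fun w : ℝ => 2 * ∑' i : ℕ, (Phi (((i : ℝ) + 1) * w) - Phi ((i : ℝ) * w)) ^ 2)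
      Filter.atTop (nhds (1 / 2)) ∧
    (1 / 2 : ℝ) < 1 := by
  refine ⟨fun d hd ↦ ?_, ?_, by norm_num⟩
  · have hs : 0 < √d := sqrt_pos.2 hd
    simpa only [integral_Ioi_scaled_stdPdf hs] using tendsto_setIntegral_Ioc_mul_one_sub_div
      (integrable_scaled_stdPdf hs).integrableOn (integrable_mul_scaled_stdPdf hs).integrableOn
  · have h := (monotone_Phi.tendsto_tsum_sq_sub_mul tendsto_Phi_atTop).const_mul 2
    rwa [Phi_zero, show (2 : ℝ) * (1 - 1 / 2) ^ 2 = 1 / 2 by norm_num] at h
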